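/- For topologizing subcategories S, T of an abelian category A, the set V(S) ∪ V(T) equals V(S • T), where S • T is the Gabriel product. Consequently, the sets V(T) for left closed subcategories T are closed under finite unions. -/
import Mathlib


open CategoryTheory CategoryTheory.Limits ZeroObject

variable {C : Type u} [Category.{v} C] [Abelian C]

/-- `X ≻ Y`: `Y` is a subquotient of a finite coproduct of copies of `X`. -/
def Dominates (X Y : C) : Prop :=
  ∃ (n : ℕ) (U : C) (i : U ⟶ ∐ fun _ : Fin n => X) (p : U ⟶ Y), Mono i ∧ Epi p

/-- `P ∈ Spec(A)`: `P` is nonzero and every nonzero subobject of `P` dominates `P`. -/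
def InSpec (P : C) : Prop :=
  ¬ IsZero P ∧ ∀ (N : C) (i : N ⟶ P), Mono i → ¬ IsZero N → Dominates N P

/-- A full subcategory (given by a predicate on objects) is topologizing if it contains
the zero objects and is closed under subobjects, quotient objects and finite
coproducts. -/
structure IsTopologizing (T : C → Prop) : Prop where
  zero : ∀ X : C, IsZero X → T X
  sub : ∀ ⦃X Y : C⦄ (i : X ⟶ Y), Mono i → T Y → T X
  quot : ∀ ⦃X Y : C⦄ (p : X ⟶ Y), Epi p → T X → T Y
  coprod : ∀ X Y : C, T X → T Y → T (X ⊞ Y)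

/-- The Gabriel product `S • T`: objects `M` admitting a short exact sequence
`0 → M' → M → M'' → 0` with `M' ∈ T` and `M'' ∈ S`. -/
def GabrielProd (S T : C → Prop) (M : C) : Prop :=
  ∃ (X₁ X₃ : C) (i : X₁ ⟶ M) (p : M ⟶ X₃) (w : i ≫ p = 0),
    (ShortComplex.mk i p w).ShortExact ∧ T X₁ ∧ S X₃

/-- `V(T)`: the set of spectrum points lying in `T`. -/
def VSet (T : C → Prop) : Set C := {P : C | InSpec P ∧ T P}

lemma isZero_sigma_fin_zero (X : C) : IsZero (∐ fun _ : Fin 0 => X) := by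
  rw [IsZero.iff_id_eq_zero]
  apply Sigma.hom_ext
  intro i
  exact i.elim0

lemma top_sigma_fin {T : C → Prop} (hT : IsTopologizing T) (X : C) (hX : T X) :
    ∀ n : ℕ, T (∐ fun _ : Fin n => X) := by
  intro n
  induction n with
  | zero => exact hT.zero _ (isZero_sigma_fin_zero X)
  | succ n ih =>
    set e : (X ⊞ (∐ fun _ : Fin n => X)) ⟶ (∐ fun _ : Fin (n+1) => X) :=
      biprod.desc (Sigma.ι (fun _ : Fin (n+1) => X) 0)
        (Sigma.desc fun i => Sigma.ι (fun _ : Fin (n+1) => X) i.succ) with he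
    have hepi : Epi e := by
      constructor
      intro Z f g h
      apply Sigma.hom_ext
      intro i
      induction i using Fin.cases with
      | zero =>
        have := biprod.inl ≫= h
        simpa [he] using this
      | succ j =>
        have := biprod.inr ≫= h
        have h2 := Sigma.ι (fun _ : Fin n => X) j ≫= this
        simpa [he] using h2
    exact hT.quot e hepi (hT.coprod _ _ hX ih)

/-- For topologizing subcategories `S`, `T` of an abelian category,

`V(S) ∪ V(T) = V(S • T)`; hence the sets `V(-)` are closed under finite unions. -/
theorem VSet_union_eq_VSet_gabrielProd (S T : C → Prop)
    (hS : IsTopologizing S) (hT : IsTopologizing T) :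
    VSet S ∪ VSet T = VSet (GabrielProd S T) := by
  ext P
  constructor
  · rintro (⟨hP, hPS⟩ | ⟨hP, hPT⟩)
    · refine ⟨hP, 0, P, 0, 𝟙 P, by simp, ?_, hT.zero _ (isZero_zero C), hPS⟩
      refine ⟨?_⟩
      rw [ShortComplex.exact_iff_mono _ rfl]
      exact inferInstance
    · refine ⟨hP, P, 0, 𝟙 P, 0, by simp, ?_, hPT, hS.zero _ (isZero_zero C)⟩
      refine ⟨?_⟩
      rw [ShortComplex.exact_iff_epi _ rfl]
      exact inferInstance
  · rintro ⟨hP, X₁, X₃, i, p, w, hse, hX₁, hX₃⟩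
    by_cases hz : IsZero X₁
    · left
      refine ⟨hP, ?_⟩
      have hi : i = 0 := hz.eq_of_src i 0
      have hexact := hse.exact
      have hmono : Mono p := by
        rw [ShortComplex.exact_iff_mono _ hi] at hexact
        exact hexact
      exact hS.sub p hmono hX₃
    · right
      refine ⟨hP, ?_⟩
      have hmono : Mono i := hse.mono_f
      obtain ⟨n, U, j, q, hj, hq⟩ := hP.2 X₁ i hmono hz
      exact hT.quot q hq (hT.sub j hj (top_sigma_fin hT X₁ hX₁ n))
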